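/- (Comparison principle on ℕ with boundary condition.) Let v, w : [0,∞) → ℝ^ℕ be such that for each j ∈ ℕ the maps t ↦ v_j(t) and t ↦ w_j(t) are continuously differentiable, and suppose there is a constant M > 0 with |v_j(t)| + |w_j(t)| ≤ M for all t ≥ 0 and j ∈ ℕ. Assume that for all t > 0 and all j ≥ 1, v_j'(t) ≤ 𝒩(v_{j−1}(t), v_j(t), v_{j+1}(t)) and w_j'(t) ≥ 𝒩(w_{j−1}(t), w_j(t), w_{j+1}(t)), and that v_0(t) ≤ w_0(t) for all t ≥ 0. If v_j(0) ≤ w_j(0) for all j ≥ 1, then v_j(t) ≤ w_j(t) for all t > 0 and all j ≥ 1. -/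

import Mathlib

/-!
Write `z = v - w`. Since `S` is increasing and `S' ≥ 0`, the nonlinearity `𝒩` is nondecreasing
in its outer arguments, and the Lipschitz bounds on `S` and `S'` give the one-sided estimate
`𝒩(v) - 𝒩(w) ≤ L ((z_{j-1})⁺ + |z_j| + (z_{j+1})⁺)` with `L` depending only on `μ` and the uniform
bound `M`. Compare `z` with the barrier `ε e^{Kt} (1 + j)`, `K = 3L + 1`. Because `z ≤ M`, only
finitely many components can ever reach the barrier, so a first touching time `t₀ > 0` at some
index `j₀ ≥ 1` exists. There `z_{j₀}` minus the barrier is maximal on `[0, t₀]`, which forces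
`K · barrier ≤ z'_{j₀} ≤ 3L · barrier`, a contradiction. Letting `ε → 0` gives `z ≤ 0`.
-/

/-- The sigmoid nonlinearity `S(x) = 1/(1 + exp(-μ(x - θ)))`. -/
noncomputable def sigmoid (μ θ x : ℝ) : ℝ := 1 / (1 + Real.exp (-μ * (x - θ)))

/-- The nonlinearity
`𝒩(u,v,w) = (1−p−q)·(S(u) − v) + p·S'(v)·(u − S(v)) + q·(S(w) − v)`. -/
noncomputable def Nfun (μ θ p q u v w : ℝ) : ℝ :=
  (1 - p - q) * (sigmoid μ θ u - v)
    + p * deriv (sigmoid μ θ) v * (u - sigmoid μ θ v)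
    + q * (sigmoid μ θ w - v)

open Set

lemma abs_sub_le_mul_of_hasDerivAt {f f' : ℝ → ℝ} {C : ℝ} (hf : ∀ x, HasDerivAt f (f' x) x)
    (hC : ∀ x, |f' x| ≤ C) (x y : ℝ) : |f y - f x| ≤ C * |y - x| :=
  convex_univ.norm_image_sub_le_of_norm_hasDerivWithin_le (fun x _ ↦ (hf x).hasDerivWithinAt)
    (fun x _ ↦ hC x) (mem_univ x) (mem_univ y)

section Sigmoid

variable {μ θ : ℝ}

lemma sigmoid_eq (μ θ x : ℝ) : sigmoid μ θ x = Real.sigmoid (μ * (x - θ)) := by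
  rw [sigmoid, Real.sigmoid_def, one_div, neg_mul]

lemma sigmoid_mem_Ioo (μ θ x : ℝ) : sigmoid μ θ x ∈ Ioo 0 1 :=
  sigmoid_eq μ θ x ▸ ⟨Real.sigmoid_pos _, Real.sigmoid_lt_one _⟩

lemma sigmoid_monotone (hμ : 0 ≤ μ) : Monotone (sigmoid μ θ) := fun x y hxy ↦ by
  simp only [sigmoid_eq]
  exact Real.sigmoid_le (mul_le_mul_of_nonneg_left (sub_le_sub_right hxy θ) hμ)

lemma hasDerivAt_sigmoid (μ θ x : ℝ) :
    HasDerivAt (sigmoid μ θ) (μ * (sigmoid μ θ x * (1 - sigmoid μ θ x))) x := by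
  have hlin : HasDerivAt (fun y ↦ μ * (y - θ)) μ x := by
    simpa using ((hasDerivAt_id x).sub_const θ).const_mul μ
  have h := (Real.hasDerivAt_sigmoid (μ * (x - θ))).comp x hlin
  rw [← sigmoid_eq, mul_comm] at h
  exact h.congr_of_eventuallyEq (.of_forall fun y ↦ sigmoid_eq μ θ y)

lemma deriv_sigmoid (μ θ : ℝ) :
    deriv (sigmoid μ θ) = fun x ↦ μ * (sigmoid μ θ x * (1 - sigmoid μ θ x)) :=
  funext fun x ↦ (hasDerivAt_sigmoid μ θ x).deriv

lemma hasDerivAt_deriv_sigmoid (μ θ x : ℝ) :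
    HasDerivAt (deriv (sigmoid μ θ))
      (μ ^ 2 * (sigmoid μ θ x * (1 - sigmoid μ θ x) * (1 - 2 * sigmoid μ θ x))) x := by
  have hS := hasDerivAt_sigmoid μ θ x
  rw [deriv_sigmoid]
  refine ((hS.mul ((hasDerivAt_const x 1).sub hS)).const_mul μ).congr_deriv ?_
  simp only [Pi.sub_apply]
  ring

lemma deriv_sigmoid_nonneg (hμ : 0 ≤ μ) (x : ℝ) : 0 ≤ deriv (sigmoid μ θ) x := by
  obtain ⟨h0, h1⟩ := sigmoid_mem_Ioo μ θ x
  rw [deriv_sigmoid]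
  exact mul_nonneg hμ (mul_nonneg h0.le (sub_nonneg.2 h1.le))

lemma deriv_sigmoid_le (hμ : 0 ≤ μ) (x : ℝ) : deriv (sigmoid μ θ) x ≤ μ := by
  obtain ⟨h0, h1⟩ := sigmoid_mem_Ioo μ θ x
  rw [deriv_sigmoid]
  exact mul_le_of_le_one_right hμ (by nlinarith)

lemma abs_sigmoid_sub_le (hμ : 0 ≤ μ) (x y : ℝ) :
    |sigmoid μ θ y - sigmoid μ θ x| ≤ μ * |y - x| :=
  abs_sub_le_mul_of_hasDerivAt (hasDerivAt_sigmoid μ θ) (fun z ↦ by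
    have h0 := deriv_sigmoid_nonneg (θ := θ) hμ z
    have h1 := deriv_sigmoid_le (θ := θ) hμ z
    rw [deriv_sigmoid] at h0 h1
    rwa [abs_of_nonneg h0]) x y

lemma abs_deriv_sigmoid_sub_le (μ θ x y : ℝ) :
    |deriv (sigmoid μ θ) y - deriv (sigmoid μ θ) x| ≤ μ ^ 2 * |y - x| :=
  abs_sub_le_mul_of_hasDerivAt (hasDerivAt_deriv_sigmoid μ θ) (fun z ↦ by
    obtain ⟨h0, h1⟩ := sigmoid_mem_Ioo μ θ z
    rw [abs_mul, abs_of_nonneg (sq_nonneg μ)]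
    refine mul_le_of_le_one_right (sq_nonneg μ) ?_
    rw [abs_le]
    constructor <;> nlinarith [mul_pos h0 (sub_pos.2 h1)]) x y

lemma sigmoid_sub_le (hμ : 0 ≤ μ) (u u' : ℝ) :
    sigmoid μ θ u - sigmoid μ θ u' ≤ μ * (u - u')⁺ := by
  rcases le_total u u' with h | h
  · linarith [sigmoid_monotone (θ := θ) hμ h, mul_nonneg hμ (posPart_nonneg (u - u'))]
  · rw [posPart_eq_self.2 (sub_nonneg.2 h), ← abs_of_nonneg (sub_nonneg.2 h)]
    exact (le_abs_self _).trans (abs_sigmoid_sub_le hμ u' u)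

end Sigmoid

lemma Nfun_sub_le {μ θ p q : ℝ} (hμ : 0 ≤ μ) (hp : 0 ≤ p) (hq : 0 ≤ q) (hpq : p + q ≤ 1)
    {M u v w u' v' w' : ℝ} (hu' : |u'| ≤ M) :
    Nfun μ θ p q u v w - Nfun μ θ p q u' v' w' ≤
      (1 + μ + μ ^ 2 * (M + 2)) * ((u - u')⁺ + |v - v'| + (w - w')⁺) := by
  set S := sigmoid μ θ
  set S' := deriv (sigmoid μ θ)
  set A := (u - u')⁺
  set B := |v - v'|
  set C := (w - w')⁺
  have hA : 0 ≤ A := posPart_nonneg _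
  have hB : 0 ≤ B := abs_nonneg _
  have hC : 0 ≤ C := posPart_nonneg _
  have hM : 0 ≤ M := (abs_nonneg u').trans hu'
  have hR : μ * A + (1 + μ ^ 2 * (M + 2)) * B + μ * C ≤
      (1 + μ + μ ^ 2 * (M + 2)) * (A + B + C) := by
    have : 0 ≤ (1 + μ ^ 2 * (M + 2)) * A + μ * B + (1 + μ ^ 2 * (M + 2)) * C := by positivity
    linarith
  have hvv' : -B ≤ v - v' := neg_abs_le _
  have hB_le : B ≤ (1 + μ ^ 2 * (M + 2)) * B := le_mul_of_one_le_left hB (by nlinarith)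
  have h₁ : S u - S u' - (v - v') ≤ μ * A + (1 + μ ^ 2 * (M + 2)) * B + μ * C := by
    linarith [sigmoid_sub_le (θ := θ) hμ u u', mul_nonneg hμ hC]
  have h₃ : S w - S w' - (v - v') ≤ μ * A + (1 + μ ^ 2 * (M + 2)) * B + μ * C := by
    linarith [sigmoid_sub_le (θ := θ) hμ w w', mul_nonneg hμ hA]
  have h₂ : S' v * (u - S v) - S' v' * (u' - S v') ≤
      μ * A + (1 + μ ^ 2 * (M + 2)) * B + μ * C := by
    have hS'v := deriv_sigmoid_nonneg (θ := θ) hμ v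
    have hS'v' := deriv_sigmoid_nonneg (θ := θ) hμ v'
    have hSv := sigmoid_mem_Ioo μ θ v
    have ha : S' v * (u - u') ≤ μ * A :=
      (mul_le_mul_of_nonneg_left (le_posPart _) hS'v).trans
        (mul_le_mul_of_nonneg_right (deriv_sigmoid_le hμ v) hA)
    have hb : (S' v - S' v') * (u' - S v) ≤ μ ^ 2 * B * (M + 1) := by
      have hu'Sv : |u' - S v| ≤ M + 1 := by
        have := abs_sub u' (S v)
        rw [abs_of_pos hSv.1] at this
        linarith [hSv.2]
      calc (S' v - S' v') * (u' - S v) ≤ |S' v - S' v'| * |u' - S v| :=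
            (le_abs_self _).trans (abs_mul _ _).le
        _ ≤ μ ^ 2 * B * (M + 1) := by
            gcongr
            exact abs_deriv_sigmoid_sub_le μ θ v' v
    have hc : S' v' * (S v' - S v) ≤ μ * (μ * B) := by
      have : S v' - S v ≤ μ * B :=
        (le_abs_self _).trans ((abs_sigmoid_sub_le hμ v v').trans_eq (by rw [abs_sub_comm]))
      exact (mul_le_mul_of_nonneg_left this hS'v').trans
        (mul_le_mul_of_nonneg_right (deriv_sigmoid_le hμ v') (by positivity))
    have hsplit : S' v * (u - S v) - S' v' * (u' - S v') =
        S' v * (u - u') + (S' v - S' v') * (u' - S v) + S' v' * (S v' - S v) := by ring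
    linarith [mul_nonneg hμ hC]
  calc Nfun μ θ p q u v w - Nfun μ θ p q u' v' w'
      = (1 - p - q) * (S u - S u' - (v - v')) + p * (S' v * (u - S v) - S' v' * (u' - S v'))
          + q * (S w - S w' - (v - v')) := by
        simp only [Nfun, S, S']
        ring
    _ ≤ (1 - p - q) * (μ * A + (1 + μ ^ 2 * (M + 2)) * B + μ * C)
          + p * (μ * A + (1 + μ ^ 2 * (M + 2)) * B + μ * C)
          + q * (μ * A + (1 + μ ^ 2 * (M + 2)) * B + μ * C) := by
        gcongr
        linarith
    _ = μ * A + (1 + μ ^ 2 * (M + 2)) * B + μ * C := by ring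
    _ ≤ _ := hR

lemma HasDerivWithinAt.nonneg_of_isMaxOn_Icc {h : ℝ → ℝ} {d a b : ℝ} (hab : a < b)
    (hd : HasDerivWithinAt h d (Icc a b) b) (hmax : IsMaxOn h (Icc a b) b) : 0 ≤ d := by
  have hseg : segment ℝ b a ⊆ Icc a b := by
    rw [segment_symm, segment_eq_Icc hab.le]
  have := hmax.localize.hasFDerivWithinAt_nonpos hd.hasFDerivWithinAt
    (sub_mem_posTangentConeAt_of_segment_subset hseg)
  rw [ContinuousLinearMap.toSpanSingleton_apply, smul_eq_mul] at this
  nlinarith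

lemma exists_first_nonneg {f : ℝ → ℕ → ℝ} {J : ℕ}
    (hf : ∀ j, ContinuousOn (fun t ↦ f t j) (Ici 0)) (hinit : ∀ j, f 0 j < 0)
    (hlarge : ∀ t ∈ Ici (0 : ℝ), ∀ j, J ≤ j → f t j < 0)
    {t₁ : ℝ} {j₁ : ℕ} (ht₁ : 0 ≤ t₁) (h₁ : 0 ≤ f t₁ j₁) :
    ∃ t₀ > 0, ∃ j₀, f t₀ j₀ = 0 ∧ ∀ t ∈ Icc 0 t₀, ∀ j, f t j ≤ 0 := by
  set bad := ⋃ j ∈ Iio J, Ici 0 ∩ (fun t ↦ f t j) ⁻¹' Ici 0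
  have hclosed : IsClosed bad := (finite_Iio J).isClosed_biUnion fun j _ ↦
    (hf j).preimage_isClosed_of_isClosed isClosed_Ici isClosed_Ici
  have hne : bad.Nonempty :=
    ⟨t₁, mem_biUnion (not_le.1 fun hJ ↦ (hlarge t₁ ht₁ j₁ hJ).not_ge h₁) ⟨ht₁, h₁⟩⟩
  have hbdd : BddBelow bad := ⟨0, fun t ht ↦ by
    obtain ⟨j, -, ht, -⟩ := mem_iUnion₂.1 ht
    exact ht⟩
  obtain ⟨j₀, -, ht₀, hf₀⟩ := mem_iUnion₂.1 (hclosed.csInf_mem hne hbdd)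
  set t₀ := sInf bad
  have hbefore : ∀ t ∈ Ico 0 t₀, ∀ j, f t j < 0 := fun t ht j ↦ by
    by_contra! hj
    have hjJ : j < J := not_le.1 fun hJ ↦ (hlarge t ht.1 j hJ).not_ge hj
    exact (csInf_le hbdd (mem_biUnion hjJ ⟨ht.1, hj⟩)).not_gt ht.2
  have ht₀pos : 0 < t₀ := lt_of_le_of_ne ht₀ fun h ↦ (hinit j₀).not_ge (h ▸ hf₀)
  have hat : ∀ j, f t₀ j ≤ 0 := fun j ↦
    ContinuousWithinAt.closure_le (by rw [closure_Ico ht₀pos.ne]; exact right_mem_Icc.2 ht₀)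
      ((hf j t₀ ht₀).mono Ico_subset_Ici_self) continuousWithinAt_const
      fun t ht ↦ (hbefore t ht j).le
  refine ⟨t₀, ht₀pos, j₀, le_antisymm (hat j₀) hf₀, fun t ht j ↦ ?_⟩
  rcases ht.2.lt_or_eq with h | rfl
  · exact (hbefore t ⟨ht.1, h⟩ j).le
  · exact hat j

section LatticeMaximumPrinciple

variable {z z' : ℝ → ℕ → ℝ} {L M : ℝ}

lemma lt_exp_barrier
    (hz : ∀ j, ∀ t ∈ Ici (0 : ℝ), HasDerivWithinAt (fun s ↦ z s j) (z' t j) (Ici 0) t)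
    (hM : ∀ t ∈ Ici (0 : ℝ), ∀ j, z t j ≤ M)
    (hdiff : ∀ t > (0 : ℝ), ∀ j, 1 ≤ j →
      z' t j ≤ L * ((z t (j - 1))⁺ + |z t j| + (z t (j + 1))⁺))
    (hbdry : ∀ t ∈ Ici (0 : ℝ), z t 0 ≤ 0) (hinit : ∀ j, 1 ≤ j → z 0 j ≤ 0)
    {ε : ℝ} (hε : 0 < ε) :
    ∀ t ∈ Ici (0 : ℝ), ∀ j : ℕ, z t j < ε * Real.exp ((3 * |L| + 1) * t) * (1 + j) := by
  set K := 3 * |L| + 1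
  set g : ℝ → ℕ → ℝ := fun t j ↦ ε * Real.exp (K * t) * (1 + j)
  have hg_pos : ∀ t j, 0 < g t j := fun t j ↦ by positivity
  have hg_deriv : ∀ t j, HasDerivAt (fun s ↦ g s j) (K * g t j) t := fun t j ↦ by
    refine ((((hasDerivAt_id t).const_mul K).exp.const_mul ε).mul_const
      ((1 : ℝ) + j)).congr_deriv ?_
    simp only [g, id]
    ring
  have hz₀_lt : ∀ t ∈ Ici (0 : ℝ), z t 0 < g t 0 := fun t ht ↦
    (hbdry t ht).trans_lt (hg_pos t 0)
  by_contra! ⟨t₁, ht₁, j₁, h₁⟩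
  obtain ⟨J, hJ⟩ : ∃ J : ℕ, M ≤ ε * J :=
    ⟨⌈M / ε⌉₊, by rw [← div_le_iff₀' hε]; exact Nat.le_ceil _⟩
  have hlarge : ∀ t ∈ Ici (0 : ℝ), ∀ j, J ≤ j → z t j - g t j < 0 := fun t ht j hj ↦ by
    have hJj : ε * J ≤ ε * j := by gcongr
    have h1 : 1 ≤ Real.exp (K * t) := Real.one_le_exp (mul_nonneg (by positivity) ht)
    have : ε * (1 + j) ≤ g t j := by
      simp only [g]
      nlinarith [mul_pos hε (by positivity : (0 : ℝ) < 1 + j)]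
    linarith [hM t ht j]
  have hinit' : ∀ j, z 0 j - g 0 j < 0 := fun j ↦ by
    rcases Nat.eq_zero_or_pos j with rfl | hj
    · linarith [hz₀_lt 0 (mem_Ici.2 le_rfl)]
    · linarith [hinit j hj, hg_pos 0 j]
  obtain ⟨t₀, ht₀, j₀, heq, hle⟩ := exists_first_nonneg (f := fun t j ↦ z t j - g t j)
    (fun j t ht ↦
      (hz j t ht).continuousWithinAt.sub (hg_deriv t j).continuousAt.continuousWithinAt)
    hinit' hlarge ht₁ (sub_nonneg.2 h₁)
  obtain ⟨i, rfl⟩ : ∃ i, j₀ = i + 1 := Nat.exists_eq_succ_of_ne_zero fun h ↦ by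
    subst h; linarith [hz₀_lt t₀ ht₀.le]
  have hmax : 0 ≤ z' t₀ (i + 1) - K * g t₀ (i + 1) :=
    HasDerivWithinAt.nonneg_of_isMaxOn_Icc ht₀
      (((hz _ t₀ ht₀.le).sub (hg_deriv t₀ _).hasDerivWithinAt).mono Icc_subset_Ici_self)
      fun t ht ↦ show z t (i + 1) - g t (i + 1) ≤ z t₀ (i + 1) - g t₀ (i + 1) from
        heq ▸ hle t ht (i + 1)
  have hnbr : ∀ j, (z t₀ j)⁺ ≤ g t₀ j := fun j ↦
    sup_le (by linarith [hle t₀ (right_mem_Icc.2 ht₀.le) j]) (hg_pos t₀ j).le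
  have hcenter : |z t₀ (i + 1)| = g t₀ (i + 1) := by
    rw [sub_eq_zero.1 heq, abs_of_pos (hg_pos _ _)]
  have hsum : g t₀ i + g t₀ (i + 1) + g t₀ (i + 1 + 1) = 3 * g t₀ (i + 1) := by
    simp only [g]; push_cast; ring
  have hsub : z' t₀ (i + 1) ≤ |L| * (3 * g t₀ (i + 1)) := by
    have h := hdiff t₀ ht₀ (i + 1) (Nat.le_add_left 1 i)
    rw [Nat.add_sub_cancel, hcenter] at h
    calc z' t₀ (i + 1) ≤ L * ((z t₀ i)⁺ + g t₀ (i + 1) + (z t₀ (i + 1 + 1))⁺) := h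
      _ ≤ |L| * ((z t₀ i)⁺ + g t₀ (i + 1) + (z t₀ (i + 1 + 1))⁺) :=
        mul_le_mul_of_nonneg_right (le_abs_self L) (by positivity)
      _ ≤ |L| * (g t₀ i + g t₀ (i + 1) + g t₀ (i + 1 + 1)) := by gcongr <;> exact hnbr _
      _ = |L| * (3 * g t₀ (i + 1)) := by rw [hsum]
  nlinarith [hg_pos t₀ (i + 1)]

theorem nonpos_of_lattice_differential_ineq
    (hz : ∀ j, ∀ t ∈ Ici (0 : ℝ), HasDerivWithinAt (fun s ↦ z s j) (z' t j) (Ici 0) t)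
    (hM : ∀ t ∈ Ici (0 : ℝ), ∀ j, z t j ≤ M)
    (hdiff : ∀ t > (0 : ℝ), ∀ j, 1 ≤ j →
      z' t j ≤ L * ((z t (j - 1))⁺ + |z t j| + (z t (j + 1))⁺))
    (hbdry : ∀ t ∈ Ici (0 : ℝ), z t 0 ≤ 0) (hinit : ∀ j, 1 ≤ j → z 0 j ≤ 0) :
    ∀ t ∈ Ici (0 : ℝ), ∀ j, z t j ≤ 0 := fun t ht j ↦ by
  set c := Real.exp ((3 * |L| + 1) * t) * (1 + j)
  have hc : 0 < c := by positivity
  refine le_of_forall_pos_lt_add fun δ hδ ↦ ?_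
  calc z t j < δ / c * Real.exp ((3 * |L| + 1) * t) * (1 + j) :=
        lt_exp_barrier hz hM hdiff hbdry hinit (div_pos hδ hc) t ht j
    _ = 0 + δ := by rw [mul_assoc, div_mul_cancel₀ δ hc.ne', zero_add]

end LatticeMaximumPrinciple

theorem stmt_17_general (μ θ p q : ℝ) (hμ : 0 < μ)
    (hp : 0 ≤ p) (hq0 : 0 ≤ q) (hpq : p + q ≤ 1)
    (v w v' w' : ℝ → ℕ → ℝ)
    -- componentwise continuously differentiable on [0,∞)
    (hv : ∀ j : ℕ, ∀ t ∈ Set.Ici (0 : ℝ),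
      HasDerivWithinAt (fun s => v s j) (v' t j) (Set.Ici (0 : ℝ)) t)
    (hw : ∀ j : ℕ, ∀ t ∈ Set.Ici (0 : ℝ),
      HasDerivWithinAt (fun s => w s j) (w' t j) (Set.Ici (0 : ℝ)) t)
    -- uniform bound
    (M : ℝ)
    (hbound : ∀ t ∈ Set.Ici (0 : ℝ), ∀ j : ℕ, |v t j| + |w t j| ≤ M)
    -- differential inequalities for j ≥ 1
    (hsub : ∀ t > (0 : ℝ), ∀ j : ℕ, 1 ≤ j →
      v' t j ≤ Nfun μ θ p q (v t (j - 1)) (v t j) (v t (j + 1)))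
    (hsup : ∀ t > (0 : ℝ), ∀ j : ℕ, 1 ≤ j →
      Nfun μ θ p q (w t (j - 1)) (w t j) (w t (j + 1)) ≤ w' t j)
    -- boundary ordering
    (hbdry : ∀ t ∈ Set.Ici (0 : ℝ), v t 0 ≤ w t 0)
    -- initial ordering
    (hinit : ∀ j : ℕ, 1 ≤ j → v 0 j ≤ w 0 j) :
    ∀ t > (0 : ℝ), ∀ j : ℕ, 1 ≤ j → v t j ≤ w t j := by
  have hw_le : ∀ t ∈ Ici (0 : ℝ), ∀ j, |w t j| ≤ M := fun t ht j ↦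
    le_of_add_le_of_nonneg_right (hbound t ht j) (abs_nonneg _)
  have hz_nonpos := nonpos_of_lattice_differential_ineq (z := fun t j ↦ v t j - w t j)
    (z' := fun t j ↦ v' t j - w' t j) (L := 1 + μ + μ ^ 2 * (M + 2)) (M := M)
    (fun j t ht ↦ (hv j t ht).sub (hw j t ht))
    (fun t ht j ↦ by linarith [hbound t ht j, le_abs_self (v t j), neg_abs_le (w t j)])
    (fun t ht j hj ↦ by
      have := Nfun_sub_le (θ := θ) hμ.le hp hq0 hpq (u := v t (j - 1)) (v := v t j)
        (w := v t (j + 1)) (v' := w t j) (w' := w t (j + 1)) (hw_le t ht.le (j - 1))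
      linarith [hsub t ht j hj, hsup t ht j hj])
    (fun t ht ↦ sub_nonpos.2 (hbdry t ht)) (fun j hj ↦ sub_nonpos.2 (hinit j hj))
  exact fun t ht j _ ↦ sub_nonpos.1 (hz_nonpos t ht.le j)

/-- Comparison principle on `ℕ` with boundary condition. If
`v, w : [0,∞) → ℝ^ℕ` are componentwise `C¹` and uniformly bounded, `v` is a subsolution
and `w` a supersolution of the lattice equation for `j ≥ 1`, `v_0(t) ≤ w_0(t)` for all
`t ≥ 0`, and `v_j(0) ≤ w_j(0)` for all `j ≥ 1`, then `v_j(t) ≤ w_j(t)` for all `t > 0`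
and `j ≥ 1`. -/
theorem stmt_17 (μ θ p q : ℝ) (hμ : 0 < μ) (hθ : 0 ≤ θ)
    (hp : 0 ≤ p) (hq0 : 0 ≤ q) (hq1 : q ≤ 1) (hpq : p + q ≤ 1)
    (v w v' w' : ℝ → ℕ → ℝ)
    -- componentwise continuously differentiable on [0,∞)
    (hv : ∀ j : ℕ, ∀ t ∈ Set.Ici (0 : ℝ),
      HasDerivWithinAt (fun s => v s j) (v' t j) (Set.Ici (0 : ℝ)) t)
    (hw : ∀ j : ℕ, ∀ t ∈ Set.Ici (0 : ℝ),
      HasDerivWithinAt (fun s => w s j) (w' t j) (Set.Ici (0 : ℝ)) t)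
    (hv' : ∀ j : ℕ, ContinuousOn (fun t => v' t j) (Set.Ici (0 : ℝ)))
    (hw' : ∀ j : ℕ, ContinuousOn (fun t => w' t j) (Set.Ici (0 : ℝ)))
    -- uniform bound
    (M : ℝ) (hM : 0 < M)
    (hbound : ∀ t ∈ Set.Ici (0 : ℝ), ∀ j : ℕ, |v t j| + |w t j| ≤ M)
    -- differential inequalities for j ≥ 1
    (hsub : ∀ t > (0 : ℝ), ∀ j : ℕ, 1 ≤ j →
      v' t j ≤ Nfun μ θ p q (v t (j - 1)) (v t j) (v t (j + 1)))
    (hsup : ∀ t > (0 : ℝ), ∀ j : ℕ, 1 ≤ j →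
      Nfun μ θ p q (w t (j - 1)) (w t j) (w t (j + 1)) ≤ w' t j)
    -- boundary ordering
    (hbdry : ∀ t ∈ Set.Ici (0 : ℝ), v t 0 ≤ w t 0)
    -- initial ordering
    (hinit : ∀ j : ℕ, 1 ≤ j → v 0 j ≤ w 0 j) :
    ∀ t > (0 : ℝ), ∀ j : ℕ, 1 ≤ j → v t j ≤ w t j :=
  stmt_17_general μ θ p q hμ hp hq0 hpq v w v' w' hv hw M hbound hsub hsup hbdry hinit
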